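/- Let B, n, q ≥ 1, let X, Y ∈ Matrix (Fin n) (Fin B) ℝ, D ∈ Matrix (Fin n) (Fin q) ℝ, and α : Fin q → ℝ be fixed, let E₀ ∈ Matrix (Fin q) (Fin n) ℝ satisfy the nondegeneracy condition |(E₀·Y)_{k,b}| ≠ Real.exp(α k) for all k, b, and set Z_{k,b} = Real.sign((E₀·Y)_{k,b}) · max(|(E₀·Y)_{k,b}| − exp(α k), 0). Define the loss L(E) = (1/B) ∑_{r,b} ( X_{r,b} − ∑_k D_{r,k} · Real.sign((E·Y)_{k,b}) · max(|(E·Y)_{k,b}| − exp(α k), 0) )². Then L is differentiable at E₀ with Fréchet derivative H ↦ ∑_{k < q} ∑_{j < n} G_{k,j} H_{k,j}, where G_{k,j} = −(2/B) ∑_{b < B} ( Dᵀ·(X − D·Z) )_{k,b} · (if exp(α k) < |(E₀·Y)_{k,b}| then 1 else 0) · Y_{j,b}. That is, ∂L/∂E = −(2/B) [ Dᵀ(X − D T_{exp(α1ᵀ)}(E₀Y)) ⊙ 1_{|E₀Y| > exp(α1ᵀ)} ] Yᵀ. -/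

import Mathlib

/-! Off the kink set `|t| = c`, soft-thresholding is locally `0`, `t - c` or `t + c`, so it is
differentiable there with derivative the indicator of `c < |t|`. The loss is then a composition
of differentiable maps, and the chain rule gives its derivative as a Frobenius pairing
`H ↦ -(2/B) ⟪X - DZ, D (M ⊙ (H Y))⟫` with `M = 1_{|E₀Y| > exp α}`; moving `D` and `Y` to the
other side of the pairing yields the gradient `-(2/B) (Dᵀ(X - DZ) ⊙ M) Yᵀ`. -/

open Matrix

noncomputable def softThreshold (c t : ℝ) : ℝ := Real.sign t * max (|t| - c) 0

section softThreshold
variable {c t : ℝ}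

theorem softThreshold_of_abs_le (h : |t| ≤ c) : softThreshold c t = 0 := by
  rw [softThreshold, max_eq_right (by linarith), mul_zero]

theorem softThreshold_of_lt (hc : 0 ≤ c) (h : c < t) : softThreshold c t = t - c := by
  have ht : 0 < t := hc.trans_lt h
  rw [softThreshold, Real.sign_of_pos ht, abs_of_pos ht, max_eq_left (by linarith), one_mul]

theorem softThreshold_of_lt_neg (hc : 0 ≤ c) (h : t < -c) : softThreshold c t = t + c := by
  have ht : t < 0 := by linarith
  rw [softThreshold, Real.sign_of_neg ht, abs_of_neg ht, max_eq_left (by linarith)]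
  ring

theorem hasDerivAt_softThreshold (hc : 0 ≤ c) (h : |t| ≠ c) :
    HasDerivAt (softThreshold c) (if c < |t| then 1 else 0) t := by
  rcases h.lt_or_gt with hlt | hgt
  · rw [if_neg hlt.not_gt]
    refine (hasDerivAt_const t 0).congr_of_eventuallyEq ?_
    filter_upwards [(continuous_abs.tendsto t).eventually_lt_const hlt] with s hs
    exact softThreshold_of_abs_le hs.le
  rw [if_pos hgt]
  rcases lt_abs.mp hgt with hpos | hneg
  · refine ((hasDerivAt_id t).sub_const c).congr_of_eventuallyEq ?_
    filter_upwards [eventually_gt_nhds hpos] with s hs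
    exact softThreshold_of_lt hc hs
  · refine ((hasDerivAt_id t).add_const c).congr_of_eventuallyEq ?_
    filter_upwards [eventually_lt_nhds (lt_neg.mp hneg)] with s hs
    exact softThreshold_of_lt_neg hc hs

end softThreshold

theorem hasFDerivAt_apply_apply {m n : Type*} (k : m) (j : n)
    (E₀ : m → n → ℝ) :
    HasFDerivAt (fun E : m → n → ℝ => E k j)
      ((ContinuousLinearMap.proj j).comp
        (ContinuousLinearMap.proj (R := ℝ) (φ := fun _ : m => n → ℝ) k)) E₀ :=
  ((ContinuousLinearMap.proj j).comp
    (ContinuousLinearMap.proj (R := ℝ) (φ := fun _ : m => n → ℝ) k)).hasFDerivAt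

section Entries
variable {m n : Type*} [Fintype m] [Fintype n]

theorem hasFDerivAt_sum_apply_mul (y : n → ℝ) (k : m) (E₀ : m → n → ℝ) :
    HasFDerivAt (fun E : m → n → ℝ => ∑ j, E k j * y j)
      (∑ j, y j • (ContinuousLinearMap.proj j).comp
        (ContinuousLinearMap.proj (R := ℝ) (φ := fun _ : m => n → ℝ) k)) E₀ :=
  HasFDerivAt.fun_sum fun j _ => (hasFDerivAt_apply_apply k j E₀).mul_const (y j)

theorem hasFDerivAt_softThreshold_sum_apply_mul
    {c : ℝ} (hc : 0 ≤ c) (y : n → ℝ) (k : m) (E₀ : m → n → ℝ) (h : |∑ j, E₀ k j * y j| ≠ c) :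
    HasFDerivAt (fun E : m → n → ℝ => softThreshold c (∑ j, E k j * y j))
      ((if c < |∑ j, E₀ k j * y j| then (1 : ℝ) else 0) •
        ∑ j, y j • (ContinuousLinearMap.proj j).comp
          (ContinuousLinearMap.proj (R := ℝ) (φ := fun _ : m => n → ℝ) k)) E₀ :=
  (hasDerivAt_softThreshold hc h).comp_hasFDerivAt (f := fun E : m → n → ℝ => ∑ j, E k j * y j)
    E₀ (hasFDerivAt_sum_apply_mul y k E₀)

end Entries

namespace Matrix
variable {m n o p R : Type*} [Fintype m] [Fintype n] [Fintype o] [Fintype p] [CommSemiring R]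

theorem sum_mul_mul_apply_eq_transpose_mul (A : Matrix m p R) (B : Matrix m n R)
    (C : Matrix n p R) :
    ∑ i, ∑ l, A i l * (B * C) i l = ∑ j, ∑ l, (Bᵀ * A) j l * C j l := by
  simp only [mul_apply, transpose_apply, Finset.mul_sum, Finset.sum_mul]
  rw [Finset.sum_comm_cycle]
  refine Finset.sum_congr rfl fun j _ => Finset.sum_comm.trans ?_
  exact Finset.sum_congr rfl fun l _ => Finset.sum_congr rfl fun i _ => by ring

theorem sum_mul_mul_apply_eq_mul_transpose (A : Matrix m p R) (B : Matrix m n R)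
    (C : Matrix n p R) :
    ∑ i, ∑ l, A i l * (B * C) i l = ∑ i, ∑ j, (A * Cᵀ) i j * B i j := by
  simp only [mul_apply, transpose_apply, Finset.mul_sum, Finset.sum_mul]
  refine Finset.sum_congr rfl fun i _ => Finset.sum_comm.trans ?_
  exact Finset.sum_congr rfl fun j _ => Finset.sum_congr rfl fun l _ => by ring

theorem sum_mul_mul_hadamard_mul_apply (V : Matrix m p R) (D : Matrix m n R) (M : Matrix n p R)
    (H : Matrix n o R) (Y : Matrix o p R) :
    ∑ i, ∑ l, V i l * (D * (M ⊙ (H * Y))) i l = ∑ k, ∑ j, ((Dᵀ * V) ⊙ M * Yᵀ) k j * H k j := by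
  rw [sum_mul_mul_apply_eq_transpose_mul, ← sum_mul_mul_apply_eq_mul_transpose]
  simp only [hadamard_apply, mul_assoc]

end Matrix

theorem hasFDerivAt_loss_wrt_E_general (B n q : ℕ)
    (X Y : Matrix (Fin n) (Fin B) ℝ)
    (D : Matrix (Fin n) (Fin q) ℝ) (α : Fin q → ℝ)
    (E₀ : Fin q → Fin n → ℝ)
    (hnd : ∀ (k : Fin q) (b : Fin B),
      |∑ j : Fin n, E₀ k j * Y j b| ≠ Real.exp (α k))
    (Z : Matrix (Fin q) (Fin B) ℝ)
    (hZ : ∀ (k : Fin q) (b : Fin B),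
      Z k b = Real.sign (∑ j : Fin n, E₀ k j * Y j b)
        * max (|∑ j : Fin n, E₀ k j * Y j b| - Real.exp (α k)) 0) :
    ∃ f : (Fin q → Fin n → ℝ) →L[ℝ] ℝ,
      (∀ H : Fin q → Fin n → ℝ,
        f H = ∑ k : Fin q, ∑ j : Fin n,
          (-(2 / (B : ℝ)) * ∑ b : Fin B,
            (Dᵀ * (X - D * Z)) k b
              * (if Real.exp (α k) < |∑ j' : Fin n, E₀ k j' * Y j' b| then 1 else 0)
              * Y j b) * H k j) ∧
      HasFDerivAt
        (fun E : Fin q → Fin n → ℝ =>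
          (1 / (B : ℝ)) * ∑ r : Fin n, ∑ b : Fin B,
            (X r b - ∑ k : Fin q,
              D r k * (Real.sign (∑ j : Fin n, E k j * Y j b)
                * max (|∑ j : Fin n, E k j * Y j b| - Real.exp (α k)) 0)) ^ 2)
        f E₀ := by
  set d : Matrix (Fin q) (Fin B) ℝ :=
    of fun k b => if Real.exp (α k) < |∑ j, E₀ k j * Y j b| then 1 else 0
  have hthreshold k b := hasFDerivAt_softThreshold_sum_apply_mul (Real.exp_pos (α k)).le
    (fun j => Y j b) k E₀ (hnd k b)
  have hloss := (HasFDerivAt.fun_sum (u := Finset.univ) fun r _ =>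
    HasFDerivAt.fun_sum (u := Finset.univ) fun b _ =>
      (((HasFDerivAt.fun_sum (u := Finset.univ) fun k _ =>
        (hthreshold k b).const_mul (D r k)).const_sub (X r b)).pow 2)).const_mul (1 / (B : ℝ))
  refine ⟨_, fun H => ?_, hloss⟩
  calc _ = -(2 / (B : ℝ)) * ∑ r, ∑ b, (X - D * Z) r b * (D * (d ⊙ (of H * Y))) r b := by
        simp only [_root_.smul_apply, _root_.sum_apply, _root_.neg_apply,
          ContinuousLinearMap.coe_comp, Function.comp_apply, ContinuousLinearMap.proj_apply,
          smul_eq_mul]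
        rw [Finset.mul_sum, Finset.mul_sum]
        refine Finset.sum_congr rfl fun r _ => ?_
        rw [Finset.mul_sum, Finset.mul_sum]
        refine Finset.sum_congr rfl fun b _ => ?_
        simp only [d, mul_apply, hadamard_apply, Matrix.sub_apply, of_apply, hZ, softThreshold,
          mul_comm (Y _ _)]
        ring
    _ = _ := by
        rw [sum_mul_mul_hadamard_mul_apply]
        simp only [Finset.mul_sum, Finset.sum_mul, mul_apply, hadamard_apply, transpose_apply, d,
          of_apply, mul_assoc]

/-- Derivative of the mini-batch training loss with respect to the encoding
filter matrix `E`: under the nondegeneracy condition `|E₀Y| ≠ exp(α)`, the loss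
is differentiable at `E₀` with gradient
`−(2/B)[Dᵀ(X − D T_{exp(α1ᵀ)}(E₀Y)) ⊙ 1_{|E₀Y| > exp(α1ᵀ)}]Yᵀ`. -/
theorem hasFDerivAt_loss_wrt_E (B n q : ℕ) (hB : 1 ≤ B) (hn : 1 ≤ n) (hq : 1 ≤ q)
    (X Y : Matrix (Fin n) (Fin B) ℝ)
    (D : Matrix (Fin n) (Fin q) ℝ) (α : Fin q → ℝ)
    (E₀ : Fin q → Fin n → ℝ)
    (hnd : ∀ (k : Fin q) (b : Fin B),
      |∑ j : Fin n, E₀ k j * Y j b| ≠ Real.exp (α k))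
    (Z : Matrix (Fin q) (Fin B) ℝ)
    (hZ : ∀ (k : Fin q) (b : Fin B),
      Z k b = Real.sign (∑ j : Fin n, E₀ k j * Y j b)
        * max (|∑ j : Fin n, E₀ k j * Y j b| - Real.exp (α k)) 0) :
    ∃ f : (Fin q → Fin n → ℝ) →L[ℝ] ℝ,
      (∀ H : Fin q → Fin n → ℝ,
        f H = ∑ k : Fin q, ∑ j : Fin n,
          (-(2 / (B : ℝ)) * ∑ b : Fin B,
            (Dᵀ * (X - D * Z)) k b
              * (if Real.exp (α k) < |∑ j' : Fin n, E₀ k j' * Y j' b| then 1 else 0)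
              * Y j b) * H k j) ∧
      HasFDerivAt
        (fun E : Fin q → Fin n → ℝ =>
          (1 / (B : ℝ)) * ∑ r : Fin n, ∑ b : Fin B,
            (X r b - ∑ k : Fin q,
              D r k * (Real.sign (∑ j : Fin n, E k j * Y j b)
                * max (|∑ j : Fin n, E k j * Y j b| - Real.exp (α k)) 0)) ^ 2)
        f E₀ :=
  hasFDerivAt_loss_wrt_E_general B n q X Y D α E₀ hnd Z hZ
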